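/- For every probability measure η on 𝒳, 1/L_η(1) ≤ 2 · Σ_{e : Q(e) ≠ 0} (1/Q(e)) · ( Σ_{x,y : e ∈ γ(x,y)} π(x)η(y) )². -/

import Mathlib

open scoped BigOperators

noncomputable section

/-- The Dirichlet form `E(f,g)`. -/
def dirichletForm {X : Type} [Fintype X] (π : X → ℝ) (k : X → X → ℝ)
    (f g : X → ℝ) : ℝ :=
  (1 / 2) * ∑ x, ∑ y, (f x - f y) * (g x - g y) * k x y * π x * π y

/-- The sup norm `‖f‖_∞`. -/
def supNorm {X : Type} [Fintype X] (f : X → ℝ) : ℝ := ⨆ x, |f x|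

/-- The generalized Poincaré constant `L_η(p)`. -/
def genPoincare {X : Type} [Fintype X] (π : X → ℝ) (k : X → X → ℝ)
    (η : X → ℝ) (p : ℝ) : ℝ :=
  sInf { r : ℝ | ∃ f : X → ℝ, f ≠ 0 ∧ (∑ x, π x * f x) = 0 ∧ (∑ x, η x * |f x|) ≠ 0 ∧
    r = dirichletForm π k f f * supNorm f ^ ((2 - 2 * p) / p) /
      (∑ x, η x * |f x|) ^ (2 / p) }

/-- The (ordered) edges of a path given as its list of successive vertices. -/
def pathEdges {X : Type} (l : List X) : List (X × X) := l.zip l.tail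

/-- The weight `Q(e) = k(x,y) π(x) π(y)` of an edge `e = (x,y)`. -/
def Qw {X : Type} (π : X → ℝ) (k : X → X → ℝ) (e : X × X) : ℝ :=
  k e.1 e.2 * π e.1 * π e.2


/-!
For `π(f) = 0` write `f(y) = ∑ₓ π(x) (f(y) - f(x))` and bound `|f(y) - f(x)|` by the sum of
`|f(b) - f(a)|` over the distinct edges `(a, b)` of `γ(x, y)`. Averaging against `π(x) η(y)` gives
`η(|f|) ≤ ∑ₑ |∇f(e)| w(e)` with `w(e) = ∑_{e ∈ γ(x,y)} π(x) η(y)`; Cauchy–Schwarz with weights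
`Q(e)` then yields `η(|f|)² ≤ (∑ₑ Q(e) |∇f(e)|²) ∑ₑ w(e)² / Q(e) = 2 E(f,f) ∑ₑ w(e)² / Q(e)`.
-/

section Paths

variable {X : Type}

lemma pathEdges_cons_cons (x y : X) (t : List X) :
    pathEdges (x :: y :: t) = (x, y) :: pathEdges (y :: t) := rfl

lemma fst_mem_of_mem_pathEdges {l : List X} {e : X × X} (he : e ∈ pathEdges l) : e.1 ∈ l :=
  (List.of_mem_zip he).1

variable [DecidableEq X] {E : Type*} [PseudoMetricSpace E]

/-- Telescoping along the part of the path after `v`, where an edge met twice is counted once: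
if the first edge `(v, c)` recurs later, restart from that later occurrence of `v`. -/
lemma dist_le_sum_pathEdges (f : X → E) :
    ∀ {l : List X} {v b : X}, v ∈ l → l.getLast? = some b →
      dist (f v) (f b) ≤ ∑ e ∈ (pathEdges l).toFinset, dist (f e.1) (f e.2)
  | [], _, _, hv, _ => by simp at hv
  | [x], v, b, hv, hb => by
    obtain rfl : v = x := List.mem_singleton.1 hv
    obtain rfl : v = b := by simpa using hb
    simp [pathEdges]
  | x :: c :: t, v, b, hv, hb => by
    rw [List.getLast?_cons_cons] at hb
    have htail : ∑ e ∈ (pathEdges (c :: t)).toFinset, dist (f e.1) (f e.2) ≤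
        ∑ e ∈ (pathEdges (x :: c :: t)).toFinset, dist (f e.1) (f e.2) := by
      refine Finset.sum_le_sum_of_subset_of_nonneg (fun e he => ?_) fun _ _ _ => dist_nonneg
      simp only [List.mem_toFinset, pathEdges_cons_cons] at he ⊢
      exact List.mem_cons_of_mem _ he
    rcases List.mem_cons.1 hv with rfl | hv
    · by_cases hvc : (v, c) ∈ pathEdges (c :: t)
      · exact (dist_le_sum_pathEdges f (fst_mem_of_mem_pathEdges hvc) hb).trans htail
      · rw [pathEdges_cons_cons, List.toFinset_cons, Finset.sum_insert (by simpa using hvc)]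
        exact (dist_triangle _ (f c) _).trans
          (add_le_add_right (dist_le_sum_pathEdges f List.mem_cons_self hb) _)
    · exact (dist_le_sum_pathEdges f hv hb).trans htail

end Paths

lemma Qw_nonneg {X : Type} {π : X → ℝ} {k : X → X → ℝ} (hπ : ∀ x, 0 ≤ π x) (hk : ∀ x y, 0 ≤ k x y)
    (e : X × X) : 0 ≤ Qw π k e :=
  mul_nonneg (mul_nonneg (hk _ _) (hπ _)) (hπ _)

section Flow

variable {X : Type} [Fintype X] [DecidableEq X]

def pathFlow (π η : X → ℝ) (γ : X → X → List X) (e : X × X) : ℝ :=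
  ∑ x, ∑ y, if x ≠ y ∧ e ∈ pathEdges (γ x y) then π x * η y else 0

variable {π η : X → ℝ} {γ : X → X → List X}

lemma mul_dist_le_sum_pathEdges {E : Type*} [PseudoMetricSpace E] (f : X → E)
    (hπ : ∀ x, 0 ≤ π x) (hη : ∀ x, 0 ≤ η x)
    (hγ : ∀ x y, x ≠ y → x ∈ γ x y ∧ (γ x y).getLast? = some y) (x y : X) :
    π x * η y * dist (f x) (f y) ≤
      ∑ e, (if x ≠ y ∧ e ∈ pathEdges (γ x y) then π x * η y else 0) * dist (f e.1) (f e.2) := by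
  rcases eq_or_ne x y with rfl | hxy
  · simp
  obtain ⟨hx, hy⟩ := hγ x y hxy
  calc π x * η y * dist (f x) (f y)
      ≤ π x * η y * ∑ e ∈ (pathEdges (γ x y)).toFinset, dist (f e.1) (f e.2) :=
        mul_le_mul_of_nonneg_left (dist_le_sum_pathEdges f hx hy) (mul_nonneg (hπ x) (hη y))
    _ = _ := by
        simp only [Finset.mul_sum, hxy, ne_eq, not_false_eq_true, true_and, ite_mul, zero_mul]
        rw [← Finset.sum_filter]
        congr 1
        ext e
        simp

lemma sum_sum_mul_dist_le_sum_dist_mul_pathFlow {E : Type*} [PseudoMetricSpace E] (f : X → E)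
    (hπ : ∀ x, 0 ≤ π x) (hη : ∀ x, 0 ≤ η x)
    (hγ : ∀ x y, x ≠ y → x ∈ γ x y ∧ (γ x y).getLast? = some y) :
    ∑ x, ∑ y, π x * η y * dist (f x) (f y) ≤ ∑ e, dist (f e.1) (f e.2) * pathFlow π η γ e := by
  calc ∑ x, ∑ y, π x * η y * dist (f x) (f y)
      ≤ ∑ x, ∑ y, ∑ e,
          (if x ≠ y ∧ e ∈ pathEdges (γ x y) then π x * η y else 0) * dist (f e.1) (f e.2) :=
        Finset.sum_le_sum fun x _ => Finset.sum_le_sum fun y _ =>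
          mul_dist_le_sum_pathEdges f hπ hη hγ x y
    _ = ∑ e, dist (f e.1) (f e.2) * pathFlow π η γ e := by
        simp only [pathFlow, Finset.mul_sum]
        conv_rhs => rw [Finset.sum_comm]
        exact Finset.sum_congr rfl fun x _ => by rw [Finset.sum_comm]; simp only [mul_comm]

lemma pathFlow_eq_zero_of_Qw_eq_zero {k : X → X → ℝ} (hπ : ∀ x, π x ≠ 0)
    (hγ : ∀ x y, x ≠ y → ∀ e ∈ pathEdges (γ x y), k e.1 e.2 ≠ 0) {e : X × X}
    (he : Qw π k e = 0) : pathFlow π η γ e = 0 := by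
  refine Finset.sum_eq_zero fun x _ => Finset.sum_eq_zero fun y _ => if_neg ?_
  rintro ⟨hxy, hmem⟩
  exact mul_ne_zero (mul_ne_zero (hγ x y hxy e hmem) (hπ _)) (hπ _) he

end Flow

lemma Finset.sq_sum_mul_le_sum_mul_sq_mul_sum_sq_div {ι : Type*} (s : Finset ι) {a b q : ι → ℝ}
    (hq : ∀ i ∈ s, 0 ≤ q i) (hb : ∀ i ∈ s, q i = 0 → b i = 0) :
    (∑ i ∈ s, a i * b i) ^ 2 ≤ (∑ i ∈ s, q i * a i ^ 2) * ∑ i ∈ s, b i ^ 2 / q i := by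
  refine Finset.sum_sq_le_sum_mul_sum_of_sq_le_mul s (fun i hi => mul_nonneg (hq i hi) (sq_nonneg _))
    (fun i hi => div_nonneg (sq_nonneg _) (hq i hi)) fun i hi => le_of_eq ?_
  rcases eq_or_ne (q i) 0 with hqi | hqi
  · simp [hb i hi hqi, hqi]
  · field_simp

lemma abs_le_sum_mul_dist_of_sum_mul_eq_zero {X : Type} [Fintype X] {π f : X → ℝ}
    (hπ : ∀ x, 0 ≤ π x) (hπ1 : ∑ x, π x = 1) (hf : ∑ x, π x * f x = 0) (y : X) :
    |f y| ≤ ∑ x, π x * dist (f x) (f y) := by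
  have hfy : f y = ∑ x, π x * (f y - f x) := by
    simp only [mul_sub, Finset.sum_sub_distrib, ← Finset.sum_mul, hπ1, hf, one_mul, sub_zero]
  calc |f y| ≤ ∑ x, |π x * (f y - f x)| :=
        (congrArg abs hfy).trans_le (Finset.abs_sum_le_sum_abs _ _)
    _ = ∑ x, π x * dist (f x) (f y) := by
        simp only [abs_mul, abs_of_nonneg (hπ _), Real.dist_eq, abs_sub_comm]

lemma sum_Qw_mul_dist_sq {X : Type} [Fintype X] (π : X → ℝ) (k : X → X → ℝ) (f : X → ℝ) :
    ∑ e : X × X, Qw π k e * dist (f e.1) (f e.2) ^ 2 = 2 * dirichletForm π k f f := by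
  simp only [dirichletForm, Qw, Fintype.sum_prod_type, Real.dist_eq, sq_abs, Finset.mul_sum]
  exact Finset.sum_congr rfl fun x _ => Finset.sum_congr rfl fun y _ => by ring

theorem sq_sum_mul_abs_le_two_mul_dirichletForm_mul {X : Type} [Fintype X] [DecidableEq X]
    {π η f : X → ℝ} {k : X → X → ℝ} {γ : X → X → List X}
    (hπ : ∀ x, 0 < π x) (hπ1 : ∑ x, π x = 1) (hk : ∀ x y, 0 ≤ k x y)
    (hγ : ∀ x y, x ≠ y → (γ x y).head? = some x ∧ (γ x y).getLast? = some y ∧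
      ∀ e ∈ pathEdges (γ x y), k e.1 e.2 ≠ 0)
    (hη : ∀ x, 0 ≤ η x) (hf : ∑ x, π x * f x = 0) :
    (∑ x, η x * |f x|) ^ 2 ≤
      2 * dirichletForm π k f f * ∑ e, pathFlow π η γ e ^ 2 / Qw π k e := by
  have hπ₀ : ∀ x, 0 ≤ π x := fun x => (hπ x).le
  have hmem : ∀ x y, x ≠ y → x ∈ γ x y ∧ (γ x y).getLast? = some y := fun x y hxy =>
    ⟨List.mem_of_mem_head? (hγ x y hxy).1, (hγ x y hxy).2.1⟩
  have hflow : ∑ x, η x * |f x| ≤ ∑ e, dist (f e.1) (f e.2) * pathFlow π η γ e :=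
    calc ∑ y, η y * |f y|
        ≤ ∑ y, η y * ∑ x, π x * dist (f x) (f y) := Finset.sum_le_sum fun y _ =>
          mul_le_mul_of_nonneg_left (abs_le_sum_mul_dist_of_sum_mul_eq_zero hπ₀ hπ1 hf y) (hη y)
      _ = ∑ x, ∑ y, π x * η y * dist (f x) (f y) := by
          simp only [Finset.mul_sum]
          rw [Finset.sum_comm]
          exact Finset.sum_congr rfl fun _ _ => Finset.sum_congr rfl fun _ _ => by ring
      _ ≤ _ := sum_sum_mul_dist_le_sum_dist_mul_pathFlow f hπ₀ hη hmem
  calc (∑ x, η x * |f x|) ^ 2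
      ≤ (∑ e, dist (f e.1) (f e.2) * pathFlow π η γ e) ^ 2 :=
        pow_le_pow_left₀ (Finset.sum_nonneg fun x _ => mul_nonneg (hη x) (abs_nonneg _)) hflow 2
    _ ≤ (∑ e, Qw π k e * dist (f e.1) (f e.2) ^ 2) * ∑ e, pathFlow π η γ e ^ 2 / Qw π k e :=
        Finset.univ.sq_sum_mul_le_sum_mul_sq_mul_sum_sq_div (fun e _ => Qw_nonneg hπ₀ hk e)
          fun e _ => pathFlow_eq_zero_of_Qw_eq_zero (fun x => (hπ x).ne') fun x y hxy =>
            (hγ x y hxy).2.2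
    _ = _ := by rw [sum_Qw_mul_dist_sq]

lemma genPoincare_one {X : Type} [Fintype X] (π : X → ℝ) (k : X → X → ℝ) (η : X → ℝ) :
    genPoincare π k η 1 = sInf {r : ℝ | ∃ f : X → ℝ, f ≠ 0 ∧ ∑ x, π x * f x = 0 ∧
      ∑ x, η x * |f x| ≠ 0 ∧ r = dirichletForm π k f f / (∑ x, η x * |f x|) ^ 2} := by
  norm_num [genPoincare]

lemma one_div_sInf_le {S : Set ℝ} {c : ℝ} (hc : 0 ≤ c) (hS : ∀ r ∈ S, 1 ≤ c * r) :
    1 / sInf S ≤ c := by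
  rcases S.eq_empty_or_nonempty with rfl | ⟨r₀, hr₀⟩
  · simpa using hc
  have hc₀ : 0 < c := hc.lt_of_ne <| by rintro rfl; linarith [hS r₀ hr₀, zero_mul r₀]
  have hle : 1 / c ≤ sInf S :=
    le_csInf ⟨r₀, hr₀⟩ fun r hr => (div_le_iff₀' hc₀).2 (hS r hr)
  exact (one_div_le ((one_div_pos.2 hc₀).trans_le hle) hc₀).2 hle

theorem statement5_general {X : Type} [Fintype X] [DecidableEq X]
    (π : X → ℝ) (hπpos : ∀ x, 0 < π x) (hπ1 : ∑ x, π x = 1)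
    (k : X → X → ℝ) (hknn : ∀ x y, 0 ≤ k x y)
    -- a choice of a path `γ x y` from `x` to `y` for each pair of distinct points
    (γ : X → X → List X)
    (hγ : ∀ x y, x ≠ y → (γ x y).head? = some x ∧ (γ x y).getLast? = some y ∧
      ∀ e ∈ pathEdges (γ x y), k e.1 e.2 ≠ 0)
    (η : X → ℝ) (hηnn : ∀ x, 0 ≤ η x) :
    1 / genPoincare π k η 1 ≤
      2 * (∑ e : X × X, if Qw π k e ≠ 0 then
          (1 / Qw π k e) *
            (∑ x, ∑ y, if x ≠ y ∧ e ∈ pathEdges (γ x y) then π x * η y else 0) ^ 2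
          else 0) := by
  -- the guard `Qw π k e ≠ 0` is redundant, since `1 / 0 = 0`
  have hguard : (∑ e : X × X, if Qw π k e ≠ 0 then (1 / Qw π k e) * pathFlow π η γ e ^ 2 else 0)
      = ∑ e, pathFlow π η γ e ^ 2 / Qw π k e :=
    Finset.sum_congr rfl fun e _ => by split_ifs <;> simp_all [div_eq_inv_mul]
  change _ ≤ 2 * (∑ e : X × X, if Qw π k e ≠ 0 then (1 / Qw π k e) * pathFlow π η γ e ^ 2 else 0)
  rw [hguard, genPoincare_one]
  refine one_div_sInf_le (mul_nonneg zero_le_two <| Finset.sum_nonneg fun e _ =>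
    div_nonneg (sq_nonneg _) (Qw_nonneg (fun x => (hπpos x).le) hknn e)) ?_
  rintro _ ⟨f, -, hf, hfη, rfl⟩
  rw [mul_div_assoc', le_div_iff₀ (by positivity), one_mul, mul_right_comm]
  exact sq_sum_mul_abs_le_two_mul_dirichletForm_mul hπpos hπ1 hknn hγ hηnn hf

theorem statement5 {X : Type} [Fintype X] [DecidableEq X] [Nonempty X]
    (π : X → ℝ) (hπpos : ∀ x, 0 < π x) (hπ1 : ∑ x, π x = 1)
    (k : X → X → ℝ) (hknn : ∀ x y, 0 ≤ k x y) (hksymm : ∀ x y, k x y = k y x)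
    (hconn : (SimpleGraph.fromRel fun x y => k x y ≠ 0).Connected)
    -- a choice of a path `γ x y` from `x` to `y` for each pair of distinct points
    (γ : X → X → List X)
    (hγ : ∀ x y, x ≠ y → (γ x y).head? = some x ∧ (γ x y).getLast? = some y ∧
      ∀ e ∈ pathEdges (γ x y), k e.1 e.2 ≠ 0)
    (η : X → ℝ) (hηnn : ∀ x, 0 ≤ η x) (hη1 : ∑ x, η x = 1) :
    1 / genPoincare π k η 1 ≤
      2 * (∑ e : X × X, if Qw π k e ≠ 0 then
          (1 / Qw π k e) *
            (∑ x, ∑ y, if x ≠ y ∧ e ∈ pathEdges (γ x y) then π x * η y else 0) ^ 2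
          else 0) :=
  statement5_general π hπpos hπ1 k hknn γ hγ η hηnn

end
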